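/- arXiv:1601.04237 — 2 statements merged into one kernel-verified Lean document; each statement's English description precedes it below -/
import Mathlib

section
/- If g_n : ℝ → ℝ is a nonnegative continuous function supported in (α_n, α_{n-1}) with ∫_{α_n}^{α_{n-1}} g_n(x) dx = 1 and x·g_n(x) ≤ 2/n for all x, and f_n(z) = (∫_0^z ∫_0^y g_n(x) dx dy)² for z ∈ ℝ, then f_n(z) converges to (max(z,0))² as n → ∞ for every z ∈ ℝ, and the convergence is monotone increasing in n. -/
open Filter MeasureTheory

theorem stmt_1 (α : ℕ → ℝ)
    (hα : ∀ n : ℕ, α n = Real.exp (-((n : ℝ) * (n + 1)) / 2))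
    (g : ℕ → ℝ → ℝ)
    (hg_cont : ∀ n, 1 ≤ n → Continuous (g n))
    (hg_nonneg : ∀ n, 1 ≤ n → ∀ x, 0 ≤ g n x)
    (hg_supp : ∀ n, 1 ≤ n → ∀ x, x ∉ Set.Ioo (α n) (α (n - 1)) → g n x = 0)
    (hg_int : ∀ n, 1 ≤ n → ∫ x in α n..α (n - 1), g n x = 1)
    (hg_bound : ∀ n, 1 ≤ n → ∀ x, x * g n x ≤ 2 / (n : ℝ))
    (f : ℕ → ℝ → ℝ)
    (hf : ∀ n z, f n z = (∫ y in (0:ℝ)..z, ∫ x in (0:ℝ)..y, g n x) ^ 2) :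
    ∀ z : ℝ, (∀ n, 1 ≤ n → f n z ≤ f (n + 1) z) ∧
      Tendsto (fun n => f n z) atTop (nhds ((max z 0) ^ 2)) := by
  have hαpos : ∀ n, 0 < α n := fun n => by rw [hα]; positivity
  have hαtop : Tendsto (fun n : ℕ => ((n : ℝ) * ((n : ℝ) + 1)) / 2) atTop atTop := by
    apply tendsto_atTop_mono _ tendsto_natCast_atTop_atTop
    intro n
    rcases Nat.eq_zero_or_pos n with h | h
    · simp [h]
    · have h1 : (1 : ℝ) ≤ (n : ℝ) := by exact_mod_cast h
      nlinarith
  have hα0 : Tendsto α atTop (nhds 0) := by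
    have h2 := Real.tendsto_exp_atBot.comp (tendsto_neg_atBot_iff.mpr hαtop)
    exact h2.congr fun n => by
      simp only [Function.comp_apply]; rw [hα n, neg_div]
  have hα1 : Tendsto (fun n => α (n - 1)) atTop (nhds 0) :=
    hα0.comp (tendsto_sub_atTop_nat 1)
  have hInt : ∀ n, 1 ≤ n → ∀ a b : ℝ, IntervalIntegrable (g n) volume a b :=
    fun n hn a b => (hg_cont n hn).intervalIntegrable a b
  have hGzero : ∀ n, 1 ≤ n → ∀ y : ℝ, y ≤ α n → (∫ x in (0:ℝ)..y, g n x) = 0 := by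
    intro n hn y hy
    have h0 : Set.EqOn (g n) (fun _ => (0:ℝ)) (Set.uIcc (0:ℝ) y) := by
      intro x hx
      apply hg_supp n hn
      rintro ⟨h1, h2⟩
      have hxle : x ≤ α n := by
        rcases Set.mem_uIcc.mp hx with ⟨_, h⟩ | ⟨_, h⟩
        · exact h.trans hy
        · exact h.trans (hαpos n).le
      exact absurd h1 (not_lt.mpr hxle)
    rw [intervalIntegral.integral_congr h0]
    simp
  have hGnonneg : ∀ n, 1 ≤ n → ∀ y : ℝ, 0 ≤ ∫ x in (0:ℝ)..y, g n x := by
    intro n hn y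
    rcases le_total y 0 with h | h
    · rw [hGzero n hn y (h.trans (hαpos n).le)]
    · exact intervalIntegral.integral_nonneg h (fun x _ => hg_nonneg n hn x)
  have hGone : ∀ n, 1 ≤ n → ∀ y : ℝ, α (n - 1) ≤ y → (∫ x in (0:ℝ)..y, g n x) = 1 := by
    intro n hn y hy
    have e1 : (∫ x in (0:ℝ)..(α (n-1)), g n x) = 1 := by
      have h := intervalIntegral.integral_add_adjacent_intervals
        (hInt n hn 0 (α n)) (hInt n hn (α n) (α (n-1)))
      rw [hGzero n hn (α n) le_rfl, hg_int n hn, zero_add] at h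
      exact h.symm
    have e2 : (∫ x in (α (n-1))..y, g n x) = 0 := by
      have h0 : Set.EqOn (g n) (fun _ => (0:ℝ)) (Set.uIcc (α (n-1)) y) := by
        intro x hx
        apply hg_supp n hn
        rintro ⟨h1, h2⟩
        have hge : α (n-1) ≤ x := by
          rcases Set.mem_uIcc.mp hx with ⟨h, _⟩ | ⟨h, _⟩
          · exact h
          · exact hy.trans h
        exact absurd h2 (not_lt.mpr hge)
      rw [intervalIntegral.integral_congr h0]; simp
    rw [← intervalIntegral.integral_add_adjacent_intervals
        (hInt n hn 0 (α (n-1))) (hInt n hn (α (n-1)) y), e1, e2, add_zero]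
  have hGle1 : ∀ n, 1 ≤ n → ∀ y : ℝ, (∫ x in (0:ℝ)..y, g n x) ≤ 1 := by
    intro n hn y
    rcases le_total y (α (n-1)) with h | h
    · rcases le_total y 0 with h0 | h0
      · rw [hGzero n hn y (h0.trans (hαpos n).le)]; norm_num
      · calc (∫ x in (0:ℝ)..y, g n x) ≤ ∫ x in (0:ℝ)..(α (n-1)), g n x := by
              apply intervalIntegral.integral_mono_interval le_rfl h0 h
              · exact ae_of_all _ (fun x => hg_nonneg n hn x)
              · exact hInt n hn 0 (α (n-1))
          _ = 1 := hGone n hn _ le_rfl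
    · exact (hGone n hn y h).le
  have hGmono : ∀ n, 1 ≤ n → ∀ y : ℝ,
      (∫ x in (0:ℝ)..y, g n x) ≤ ∫ x in (0:ℝ)..y, g (n+1) x := by
    intro n hn y
    rcases le_total y (α n) with h | h
    · rw [hGzero n hn y h]
      exact hGnonneg (n+1) (by omega) y
    · have h1 : (∫ x in (0:ℝ)..y, g (n+1) x) = 1 := by
        apply hGone (n+1) (by omega)
        simpa using h
      rw [h1]; exact hGle1 n hn y
  have hGcont : ∀ n, 1 ≤ n → Continuous (fun y => ∫ x in (0:ℝ)..y, g n x) :=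
    fun n hn => intervalIntegral.continuous_primitive (hInt n hn) 0
  have hGInt : ∀ n, 1 ≤ n → ∀ a b : ℝ,
      IntervalIntegrable (fun y => ∫ x in (0:ℝ)..y, g n x) volume a b :=
    fun n hn a b => (hGcont n hn).intervalIntegrable a b
  have hFzero : ∀ n, 1 ≤ n → ∀ z : ℝ, z ≤ 0 →
      (∫ y in (0:ℝ)..z, ∫ x in (0:ℝ)..y, g n x) = 0 := by
    intro n hn z hz
    have h0 : Set.EqOn (fun y => ∫ x in (0:ℝ)..y, g n x) (fun _ => (0:ℝ))
        (Set.uIcc (0:ℝ) z) := by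
      intro y hy
      apply hGzero n hn
      have hy0 : y ≤ 0 := by
        rcases Set.mem_uIcc.mp hy with ⟨_, h⟩ | ⟨_, h⟩
        · exact h.trans hz
        · exact h
      exact hy0.trans (hαpos n).le
    rw [intervalIntegral.integral_congr h0]; simp
  have hFnonneg : ∀ n, 1 ≤ n → ∀ z : ℝ,
      0 ≤ ∫ y in (0:ℝ)..z, ∫ x in (0:ℝ)..y, g n x := by
    intro n hn z
    rcases le_total z 0 with h | h
    · rw [hFzero n hn z h]
    · exact intervalIntegral.integral_nonneg h (fun y _ => hGnonneg n hn y)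
  have hFle : ∀ n, 1 ≤ n → ∀ z : ℝ, 0 ≤ z →
      (∫ y in (0:ℝ)..z, ∫ x in (0:ℝ)..y, g n x) ≤ z := by
    intro n hn z hz
    calc (∫ y in (0:ℝ)..z, ∫ x in (0:ℝ)..y, g n x)
        ≤ ∫ _ in (0:ℝ)..z, (1:ℝ) :=
          intervalIntegral.integral_mono_on hz (hGInt n hn 0 z)
            intervalIntegrable_const (fun y _ => hGle1 n hn y)
      _ = z := by simp
  have hFge : ∀ n, 1 ≤ n → ∀ z : ℝ, α (n-1) ≤ z →
      z - α (n-1) ≤ ∫ y in (0:ℝ)..z, ∫ x in (0:ℝ)..y, g n x := by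
    intro n hn z hz
    have e2 : (∫ y in (α (n-1))..z, ∫ x in (0:ℝ)..y, g n x) = z - α (n-1) := by
      have h0 : Set.EqOn (fun y => ∫ x in (0:ℝ)..y, g n x) (fun _ => (1:ℝ))
          (Set.uIcc (α (n-1)) z) := by
        intro y hy
        rw [Set.uIcc_of_le hz] at hy
        exact hGone n hn y hy.1
      rw [intervalIntegral.integral_congr h0]; simp
    have e1 : 0 ≤ ∫ y in (0:ℝ)..(α (n-1)), ∫ x in (0:ℝ)..y, g n x :=
      intervalIntegral.integral_nonneg (hαpos (n-1)).le (fun y _ => hGnonneg n hn y)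
    have hadd := intervalIntegral.integral_add_adjacent_intervals
      (hGInt n hn 0 (α (n-1))) (hGInt n hn (α (n-1)) z)
    rw [e2] at hadd
    linarith
  have hFmono : ∀ n, 1 ≤ n → ∀ z : ℝ,
      (∫ y in (0:ℝ)..z, ∫ x in (0:ℝ)..y, g n x)
        ≤ ∫ y in (0:ℝ)..z, ∫ x in (0:ℝ)..y, g (n+1) x := by
    intro n hn z
    rcases le_total z 0 with h | h
    · rw [hFzero n hn z h, hFzero (n+1) (by omega) z h]
    · exact intervalIntegral.integral_mono_on h (hGInt n hn 0 z)
        (hGInt (n+1) (by omega) 0 z) (fun y _ => hGmono n hn y)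
  intro z
  constructor
  · intro n hn
    rw [hf, hf]
    exact pow_le_pow_left₀ (hFnonneg n hn z) (hFmono n hn z) 2
  · rcases le_or_gt z 0 with hz | hz
    · have hmax : max z 0 = 0 := max_eq_right hz
      rw [hmax]
      have hev : ∀ᶠ n in atTop, (0:ℝ) = f n z := by
        filter_upwards [eventually_ge_atTop 1] with n hn
        rw [hf, hFzero n hn z hz]; norm_num
      have h0 : Tendsto (fun _ : ℕ => (0:ℝ)) atTop (nhds ((0:ℝ)^2)) := by
        simpa using (tendsto_const_nhds : Tendsto (fun _ : ℕ => (0:ℝ)) atTop (nhds 0))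
      exact h0.congr' hev
    · have hmax : max z 0 = z := max_eq_left hz.le
      rw [hmax]
      have hFt : Tendsto (fun n => ∫ y in (0:ℝ)..z, ∫ x in (0:ℝ)..y, g n x)
          atTop (nhds z) := by
        apply tendsto_of_tendsto_of_tendsto_of_le_of_le'
          (g := fun n => z - α (n-1)) (h := fun _ => z)
        · simpa using (tendsto_const_nhds.sub hα1 :
            Tendsto (fun n => z - α (n-1)) atTop (nhds (z - 0)))
        · exact tendsto_const_nhds
        · filter_upwards [eventually_ge_atTop 1,
            hα1.eventually (eventually_le_nhds hz)] with n hn h2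
          exact hFge n hn z h2
        · filter_upwards [eventually_ge_atTop 1] with n hn
          exact hFle n hn z hz.le
      have hFt2 := hFt.pow 2
      exact hFt2.congr (fun n => (hf n z).symm)
end

section
/- Let β : ℝ² → ℝ be continuous with |β(y,z)| ≤ K(1+|y|+|z|), and let β_n^I(y,z) = inf_{y',z'}{β(y',z') + n|y−y'| + n|z−z'|} for n ≥ K. If (y_n, z_n) → (y,z) in ℝ², then β_n^I(y_n, z_n) → β(y,z). -/
open Filter

theorem stmt_13 (K : ℝ) (hK : 0 < K) (β : ℝ → ℝ → ℝ)
    (hβ_cont : Continuous fun p : ℝ × ℝ => β p.1 p.2)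
    (hβ : ∀ y z, |β y z| ≤ K * (1 + |y| + |z|))
    (βI : ℕ → ℝ → ℝ → ℝ)
    (hβI : ∀ (n : ℕ) (y z : ℝ), βI n y z =
      ⨅ p : ℝ × ℝ, (β p.1 p.2 + (n : ℝ) * |y - p.1| + (n : ℝ) * |z - p.2|))
    (yseq zseq : ℕ → ℝ) (y z : ℝ)
    (hy : Tendsto yseq atTop (nhds y)) (hz : Tendsto zseq atTop (nhds z)) :
    Tendsto (fun n => βI n (yseq n) (zseq n)) atTop (nhds (β y z)) := by
  rw [Metric.tendsto_atTop]
  intro ε hε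
  obtain ⟨δ, hδ, hcont⟩ := Metric.continuousAt_iff.mp
    (hβ_cont.continuousAt (x := (y, z))) (ε / 2) (by linarith)
  obtain ⟨N₁, hN₁⟩ := (Metric.tendsto_atTop.mp hy) (δ / 2) (by linarith)
  obtain ⟨N₂, hN₂⟩ := (Metric.tendsto_atTop.mp hz) (δ / 2) (by linarith)
  set M : ℝ := |y| + |z| + δ with hM
  set r : ℝ := δ / 2 with hr
  have hr0 : 0 < r := by positivity
  have hM0 : 0 ≤ M := by positivity
  obtain ⟨N₃, hN₃⟩ := exists_nat_ge (K + (K * (1 + M) + |β y z|) / r)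
  refine ⟨max (max N₁ N₂) N₃, fun n hn => ?_⟩
  have hn1 : N₁ ≤ n := le_trans (le_trans (le_max_left _ _) (le_max_left _ _)) hn
  have hn2 : N₂ ≤ n := le_trans (le_trans (le_max_right _ _) (le_max_left _ _)) hn
  have hn3 : (K + (K * (1 + M) + |β y z|) / r) ≤ (n : ℝ) :=
    le_trans hN₃ (Nat.cast_le.mpr (le_trans (le_max_right _ _) hn))
  have hny : |yseq n - y| < δ / 2 := by
    have := hN₁ n hn1; rwa [Real.dist_eq] at this
  have hnz : |zseq n - z| < δ / 2 := by
    have := hN₂ n hn2; rwa [Real.dist_eq] at this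
  have hynb : |yseq n| ≤ |y| + δ / 2 := by
    have := abs_sub_abs_le_abs_sub (yseq n) y; linarith
  have hznb : |zseq n| ≤ |z| + δ / 2 := by
    have := abs_sub_abs_le_abs_sub (zseq n) z; linarith
  have hsum : |yseq n| + |zseq n| ≤ M := by
    rw [hM]; linarith
  have hdivnn : 0 ≤ (K * (1 + M) + |β y z|) / r := by positivity
  have hnK : K ≤ (n : ℝ) := by linarith
  have h2 : K * (1 + M) + |β y z| ≤ ((n : ℝ) - K) * r := by
    have hh : (K * (1 + M) + |β y z|) / r ≤ (n : ℝ) - K := by linarith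
    exact (div_le_iff₀ hr0).mp hh
  -- key lower bound
  have key : ∀ p : ℝ × ℝ,
      β y z - ε / 2 ≤ β p.1 p.2 + (n : ℝ) * |yseq n - p.1| + (n : ℝ) * |zseq n - p.2| := by
    intro p
    set a := |yseq n - p.1| with ha
    set b := |zseq n - p.2| with hb
    have ha0 : 0 ≤ a := abs_nonneg _
    have hb0 : 0 ≤ b := abs_nonneg _
    have hn0 : (0 : ℝ) ≤ n := Nat.cast_nonneg n
    rcases lt_or_ge (a + b) r with hd | hd
    · -- near case: p is within δ of (y,z)
      have hp1 : |p.1 - y| < δ := by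
        have h1 : |p.1 - y| ≤ |p.1 - yseq n| + |yseq n - y| := abs_sub_le _ _ _
        have h2 : |p.1 - yseq n| = a := by rw [ha, abs_sub_comm]
        rw [hr] at hd
        linarith
      have hp2 : |p.2 - z| < δ := by
        have h1 : |p.2 - z| ≤ |p.2 - zseq n| + |zseq n - z| := abs_sub_le _ _ _
        have h2 : |p.2 - zseq n| = b := by rw [hb, abs_sub_comm]
        rw [hr] at hd
        linarith
      have hdist : dist p (y, z) < δ := by
        rw [Prod.dist_eq, Real.dist_eq, Real.dist_eq]
        exact max_lt hp1 hp2
      have := hcont hdist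
      rw [Real.dist_eq] at this
      have hlb : β y z - ε / 2 ≤ β p.1 p.2 := by
        have := abs_lt.mp this
        linarith [this.1]
      nlinarith [mul_nonneg hn0 ha0, mul_nonneg hn0 hb0]
    · -- far case
      have hβp := hβ p.1 p.2
      have hlb : -(K * (1 + |p.1| + |p.2|)) ≤ β p.1 p.2 := (abs_le.mp hβp).1
      have hp1 : |p.1| ≤ |yseq n| + a := by
        have h1 : |p.1| - |yseq n| ≤ |p.1 - yseq n| := abs_sub_abs_le_abs_sub _ _
        have h2 : |p.1 - yseq n| = a := by rw [ha, abs_sub_comm]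
        linarith
      have hp2 : |p.2| ≤ |zseq n| + b := by
        have h1 : |p.2| - |zseq n| ≤ |p.2 - zseq n| := abs_sub_abs_le_abs_sub _ _
        have h2 : |p.2 - zseq n| = b := by rw [hb, abs_sub_comm]
        linarith
      have hK1 : K * |p.1| ≤ K * (|yseq n| + a) := mul_le_mul_of_nonneg_left hp1 hK.le
      have hK2 : K * |p.2| ≤ K * (|zseq n| + b) := mul_le_mul_of_nonneg_left hp2 hK.le
      have hKM : K * (|yseq n| + |zseq n|) ≤ K * M := mul_le_mul_of_nonneg_left hsum hK.le
      have hprod : ((n : ℝ) - K) * r ≤ ((n : ℝ) - K) * (a + b) :=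
        mul_le_mul_of_nonneg_left hd (by linarith)
      have habs : β y z ≤ |β y z| := le_abs_self _
      have e1 : ((n : ℝ) - K) * (a + b) = (n : ℝ) * a + (n : ℝ) * b - K * a - K * b := by
        ring
      have e2 : K * (1 + |p.1| + |p.2|) = K + K * |p.1| + K * |p.2| := by ring
      have e3 : K * (1 + M) = K + K * M := by ring
      have e4 : K * (|yseq n| + a) = K * |yseq n| + K * a := by ring
      have e5 : K * (|zseq n| + b) = K * |zseq n| + K * b := by ring
      have e6 : K * (|yseq n| + |zseq n|) = K * |yseq n| + K * |zseq n| := by ring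
      linarith
  have hbdd : BddBelow (Set.range fun p : ℝ × ℝ =>
      β p.1 p.2 + (n : ℝ) * |yseq n - p.1| + (n : ℝ) * |zseq n - p.2|) := by
    refine ⟨β y z - ε / 2, ?_⟩
    rintro x ⟨p, rfl⟩
    exact key p
  have hlow : β y z - ε / 2 ≤ βI n (yseq n) (zseq n) := by
    rw [hβI]; exact le_ciInf key
  have hup : βI n (yseq n) (zseq n) ≤ β (yseq n) (zseq n) := by
    rw [hβI]
    have := ciInf_le hbdd (yseq n, zseq n)
    simpa using this
  have hnear : |β (yseq n) (zseq n) - β y z| < ε / 2 := by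
    have hdist : dist ((yseq n, zseq n) : ℝ × ℝ) (y, z) < δ := by
      rw [Prod.dist_eq, Real.dist_eq, Real.dist_eq]
      exact max_lt (by linarith) (by linarith)
    have := hcont hdist
    rwa [Real.dist_eq] at this
  rw [Real.dist_eq, abs_lt]
  have := abs_lt.mp hnear
  constructor <;> linarith [this.1, this.2]
end
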